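/- arXiv:2301.10598 — 3 statements merged into one kernel-verified Lean document; each statement's English description precedes it below -/
import Mathlib

section
/- For persistence modules F, G over ℝ, d_isom(F,G) ≤ 2 · d_w(F,G). More precisely, if (F,G) is weakly (a,b)-isomorphic, then (F,G) is (a+b, a+b)-isomorphic. -/
open CategoryTheory

/-- A persistence module over `ℝ`: a functor from `(ℝ, ≤)` to `k`-vector spaces. -/
abbrev PersMod (k : Type) [Field k] := ℝ ⥤ ModuleCat k

variable {k : Type} [Field k]

/-- A degree-`a` morphism of persistence modules, i.e. a morphism `F ⟶ T_a G`:
its component at `t` is a map `F(t) ⟶ G(t + a)`, naturally in `t`. -/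
structure ShiftHom (F G : PersMod k) (a : ℝ) where
  app : ∀ t : ℝ, F.obj t ⟶ G.obj (t + a)
  nat : ∀ (s t : ℝ) (h : s ≤ t),
    F.map (homOfLE h) ≫ app t = app s ≫ G.map (homOfLE (by linarith : s + a ≤ t + a))

/-- `(F, G)` is `(a,b)`-isomorphic: there are `α : F ⟶ T_a G`, `β : G ⟶ T_b F` with
`T_a β ∘ α = τ_{0,a+b}(F)` and `T_b α ∘ β = τ_{0,a+b}(G)`. -/
def IsIsomPair (F G : PersMod k) (a b : ℝ) : Prop :=
  ∃ (ha : 0 ≤ a) (hb : 0 ≤ b) (α : ShiftHom F G a) (β : ShiftHom G F b),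
    (∀ t : ℝ, α.app t ≫ β.app (t + a) = F.map (homOfLE (by linarith : t ≤ t + a + b))) ∧
    (∀ t : ℝ, β.app t ≫ α.app (t + b) = G.map (homOfLE (by linarith : t ≤ t + b + a)))

/-- `(F, G)` is weakly `(a,b)`-isomorphic. -/
def IsWeakIsomPair (F G : PersMod k) (a b : ℝ) : Prop :=
  ∃ (ha : 0 ≤ a) (hb : 0 ≤ b) (α δ : ShiftHom F G a) (β γ : ShiftHom G F b),
    (∀ t : ℝ, α.app t ≫ β.app (t + a) = F.map (homOfLE (by linarith : t ≤ t + a + b))) ∧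
    (∀ t : ℝ, γ.app t ≫ δ.app (t + b) = G.map (homOfLE (by linarith : t ≤ t + b + a))) ∧
    (∀ t : ℝ, α.app t ≫ G.map (homOfLE (by linarith : t + a ≤ t + a + a)) =
      δ.app t ≫ G.map (homOfLE (by linarith : t + a ≤ t + a + a))) ∧
    (∀ t : ℝ, β.app t ≫ F.map (homOfLE (by linarith : t + b ≤ t + b + b)) =
      γ.app t ≫ F.map (homOfLE (by linarith : t + b ≤ t + b + b)))

/-- `(F, G)` is `(a,b)`-interleaved. -/
def IsInterleavedPair (F G : PersMod k) (a b : ℝ) : Prop :=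
  ∃ (ha : 0 ≤ a) (hb : 0 ≤ b) (α δ : ShiftHom F G a) (β γ : ShiftHom G F b),
    (∀ t : ℝ, α.app t ≫ β.app (t + a) = F.map (homOfLE (by linarith : t ≤ t + a + b))) ∧
    (∀ t : ℝ, γ.app t ≫ δ.app (t + b) = G.map (homOfLE (by linarith : t ≤ t + b + a)))

open ENNReal in
noncomputable def dIsom (F G : PersMod k) : ℝ≥0∞ :=
  sInf { c | ∃ a b : ℝ, IsIsomPair F G a b ∧ c = ENNReal.ofReal (a + b) }

open ENNReal in
noncomputable def dWIsom (F G : PersMod k) : ℝ≥0∞ :=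
  sInf { c | ∃ a b : ℝ, IsWeakIsomPair F G a b ∧ c = ENNReal.ofReal (a + b) }

open ENNReal in
noncomputable def dInt (F G : PersMod k) : ℝ≥0∞ :=
  sInf { c | ∃ a b : ℝ, IsInterleavedPair F G a b ∧ c = ENNReal.ofReal (a + b) }

/-- The canonical morphism `τ_{0,c}(F) : F ⟶ T_c F` as a degree-`c` morphism. -/
def tauHom (F : PersMod k) (c : ℝ) (hc : 0 ≤ c) : ShiftHom F F c where
  app t := F.map (homOfLE (by linarith : t ≤ t + c))
  nat s t h := by
    rw [← Functor.map_comp, ← Functor.map_comp]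
    congr 1

/-- Postcomposition with `τ_{c,c'}(F)`. -/
def tauComp (F : PersMod k) {c c' : ℝ} (h : c ≤ c') (u : ShiftHom F F c) :
    ShiftHom F F c' where
  app t := u.app t ≫ F.map (homOfLE (by linarith : t + c ≤ t + c'))
  nat s t hst := by
    rw [← Category.assoc, u.nat s t hst, Category.assoc, ← Functor.map_comp,
      Category.assoc, ← Functor.map_comp]
    congr 2

/-- Composition of shifted morphisms. -/
def ShiftHom.comp {F G H : PersMod k} {a b : ℝ} (u : ShiftHom F G a) (v : ShiftHom G H b) :
    ShiftHom F H (a + b) where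
  app t := u.app t ≫ v.app (t + a) ≫ H.map (eqToHom (add_assoc t a b))
  nat s t h := by
    rw [← Category.assoc, u.nat s t h, Category.assoc,
      ← Category.assoc _ (v.app (t + a)) _, v.nat (s + a) (t + a) (by linarith)]
    simp only [Category.assoc, ← Functor.map_comp]
    congr 3


/-! The composites of a weak isomorphism agree with the translation maps only after a further
translation, so postcompose `α` with `τ_{a,a+b}(G)` and `β` with `τ_{b,a+b}(F)`. The first new
composite is then a translate of `β ∘ α = τ`. The second is compared with `δ ∘ γ = τ`: replace `α`
by `δ` (they agree after `τ_{a,2a}`), move the translation in front of `δ` by naturality, and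
replace `β` by `γ` (they agree after `τ_{b,2b}`). -/

namespace PersMod

lemma map_comp_map (F : PersMod k) {p q r : ℝ} (hpq : p ≤ q) (hqr : q ≤ r) :
    F.map (homOfLE hpq) ≫ F.map (homOfLE hqr) = F.map (homOfLE (hpq.trans hqr)) := by
  rw [← F.map_comp, homOfLE_comp]

end PersMod

open PersMod

namespace ShiftHom

variable {F G H : PersMod k}

lemma app_comp_map {a s t r : ℝ} (u : ShiftHom F G a) (hst : s ≤ t) (htr : t + a ≤ r) :
    u.app s ≫ G.map (homOfLE (by linarith : s + a ≤ r)) =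
      F.map (homOfLE hst) ≫ u.app t ≫ G.map (homOfLE htr) := by
  rw [← Category.assoc, u.nat s t hst, Category.assoc, map_comp_map]

def postTau {a : ℝ} (u : ShiftHom F G a) {c : ℝ} (hac : a ≤ c) : ShiftHom F G c where
  app t := u.app t ≫ G.map (homOfLE (by linarith : t + a ≤ t + c))
  nat s t hst := by
    rw [← Category.assoc, u.nat s t hst, Category.assoc, Category.assoc, map_comp_map,
      map_comp_map]

lemma postTau_app_comp_postTau_app {a b c d : ℝ} (u : ShiftHom F G a) (v : ShiftHom G H b)
    (hac : a ≤ c) (hbd : b ≤ d) (t : ℝ) :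
    (u.postTau hac).app t ≫ (v.postTau hbd).app (t + c) =
      u.app t ≫ v.app (t + a) ≫ H.map (homOfLE (by linarith : t + a + b ≤ t + c + d)) := by
  simp only [postTau, Category.assoc]
  rw [← app_comp_map]

lemma comp_app_comp_map_eq_map {a b t p q r : ℝ} {α δ : ShiftHom F G a}
    {β γ : ShiftHom G F b} {h₀ : t ≤ t + b + a} {hp : t + b ≤ p} {hq : t + b + a ≤ q}
    (hγδ : γ.app t ≫ δ.app (t + b) = G.map (homOfLE h₀))
    (hαδ : α.app (t + b) ≫ G.map (homOfLE hq) = δ.app (t + b) ≫ G.map (homOfLE hq))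
    (hβγ : β.app t ≫ F.map (homOfLE hp) = γ.app t ≫ F.map (homOfLE hp))
    (hpr : p + a ≤ r) (hqr : q ≤ r) :
    β.app t ≫ α.app (t + b) ≫ G.map (homOfLE (hq.trans hqr)) =
      G.map (homOfLE (h₀.trans (hq.trans hqr))) := by
  calc β.app t ≫ α.app (t + b) ≫ G.map (homOfLE (hq.trans hqr))
      = β.app t ≫ δ.app (t + b) ≫ G.map (homOfLE (hq.trans hqr)) := by
        rw [← map_comp_map G hq hqr, ← Category.assoc (α.app _), hαδ, Category.assoc]
    _ = β.app t ≫ F.map (homOfLE hp) ≫ δ.app p ≫ G.map (homOfLE hpr) := by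
        rw [δ.app_comp_map hp hpr]
    _ = γ.app t ≫ F.map (homOfLE hp) ≫ δ.app p ≫ G.map (homOfLE hpr) := by
        rw [← Category.assoc, hβγ, Category.assoc]
    _ = G.map (homOfLE (h₀.trans (hq.trans hqr))) := by
        rw [← δ.app_comp_map hp hpr, ← Category.assoc, hγδ, map_comp_map]

end ShiftHom

theorem IsWeakIsomPair.isIsomPair_add {F G : PersMod k} {a b : ℝ}
    (h : IsWeakIsomPair F G a b) : IsIsomPair F G (a + b) (a + b) := by
  obtain ⟨ha, hb, α, δ, β, γ, hαβ, hγδ, hαδ, hβγ⟩ := h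
  refine ⟨by linarith, by linarith, α.postTau (by linarith), β.postTau (by linarith),
    fun t => ?_, fun t => ?_⟩
  · rw [ShiftHom.postTau_app_comp_postTau_app, ← Category.assoc, hαβ, map_comp_map]
  · rw [ShiftHom.postTau_app_comp_postTau_app]
    exact ShiftHom.comp_app_comp_map_eq_map (hγδ t) (hαδ (t + b)) (hβγ t)
      (by linarith) (by linarith)

theorem dIsom_le_two_mul_dWIsom (F G : PersMod k) (a b : ℝ) :
    (IsWeakIsomPair F G a b → IsIsomPair F G (a + b) (a + b)) ∧
    dIsom F G ≤ 2 * dWIsom F G := by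
  refine ⟨IsWeakIsomPair.isIsomPair_add, ?_⟩
  rw [dWIsom, sInf_eq_iInf', ENNReal.mul_iInf_of_ne two_ne_zero ENNReal.ofNat_ne_top]
  refine le_iInf ?_
  rintro ⟨_, a', b', hw, rfl⟩
  refine sInf_le ⟨a' + b', a' + b', hw.isIsomPair_add, ?_⟩
  obtain ⟨ha', hb', -⟩ := hw
  rw [two_mul, ← ENNReal.ofReal_add (by linarith) (by linarith)]
end

section
/- Triangle inequality for d_isom: if (F,G) is (a,b)-isomorphic and (G,H) is (a',b')-isomorphic, then (F,H) is (a+a', b+b')-isomorphic; consequently d_isom(F,H) ≤ d_isom(F,G) + d_isom(G,H) for persistence modules F, G, H over ℝ. -/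
open CategoryTheory

variable {k : Type} [Field k]

/-!
An `(a,b)`-isomorphism `(α, β)` of `(F, G)` and an `(a',b')`-isomorphism `(α', β')` of `(G, H)`
compose to `(α' ∘ α, β ∘ β')`. In `β ∘ β' ∘ α' ∘ α` the middle `β' ∘ α'` is a structure map of `G`;
naturality of `β` slides it past `β`, and then `β ∘ α` is a structure map of `F`. The other
composite is the same computation read from `H`. Taking infima gives the triangle inequality,
since `ENNReal.ofReal` is subadditive.
-/

lemma CategoryTheory.Functor.map_comp_map_of_isThin {X C : Type*} [Category X] [Category C]
    [Quiver.IsThin X] (F : X ⥤ C) {x y z : X} (f : x ⟶ y) (g : y ⟶ z) (h : x ⟶ z) :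
    F.map f ≫ F.map g = F.map h := by
  rw [← F.map_comp]
  congr 1
  exact Subsingleton.elim _ _

lemma CategoryTheory.Functor.map_comp_map_of_isThin_assoc {X C : Type*} [Category X] [Category C]
    [Quiver.IsThin X] (F : X ⥤ C) {x y z : X} (f : x ⟶ y) (g : y ⟶ z) (h : x ⟶ z)
    {W : C} (e : F.obj z ⟶ W) :
    F.map f ≫ F.map g ≫ e = F.map h ≫ e := by
  rw [← Category.assoc, F.map_comp_map_of_isThin]

namespace ShiftHom

variable {F G H : PersMod k} {a b a' b' : ℝ}

def cast (h : a = a') (u : ShiftHom F G a) : ShiftHom F G a' where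
  app t := u.app t ≫ G.map (eqToHom (by rw [h]))
  nat s t hst := by
    subst h
    simpa using u.nat s t hst

lemma zigzag_eq_map (α : ShiftHom F G a) (β : ShiftHom G F b) (α' : ShiftHom G H a')
    (β' : ShiftHom H G b') (hab : 0 ≤ a + b) (hab' : 0 ≤ a' + b')
    (hαβ : ∀ t (h : t ≤ t + a + b), α.app t ≫ β.app (t + a) = F.map (homOfLE h))
    (hαβ' : ∀ t (h : t ≤ t + a' + b'), α'.app t ≫ β'.app (t + a') = G.map (homOfLE h))
    {t u v : ℝ} (f : t + a + a' ⟶ u) (g : u + b' + b ⟶ v) (e : t ⟶ v) :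
    α.app t ≫ α'.app (t + a) ≫ H.map f ≫ β'.app u ≫ β.app (u + b') ≫ F.map g = F.map e := by
  have hu : t + a + a' ≤ u := leOfHom f
  rw [show f = homOfLE hu from rfl, reassoc_of% β'.nat _ _ hu,
    reassoc_of% hαβ' (t + a) (by linarith),
    G.map_comp_map_of_isThin_assoc _ _ (homOfLE (by linarith : t + a ≤ u + b')),
    reassoc_of% β.nat _ _ (by linarith : t + a ≤ u + b'), reassoc_of% hαβ t (by linarith),
    F.map_comp_map_of_isThin_assoc _ _ (homOfLE (by linarith [leOfHom g] : t ≤ u + b' + b)),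
    F.map_comp_map_of_isThin]

end ShiftHom

theorem IsIsomPair.trans {F G H : PersMod k} {a b a' b' : ℝ}
    (hFG : IsIsomPair F G a b) (hGH : IsIsomPair G H a' b') :
    IsIsomPair F H (a + a') (b + b') := by
  obtain ⟨ha, hb, α, β, hαβ, hβα⟩ := hFG
  obtain ⟨ha', hb', α', β', hαβ', hβα'⟩ := hGH
  refine ⟨by linarith, by linarith, α.comp α', (β'.comp β).cast (add_comm b' b), fun t => ?_,
    fun t => ?_⟩
  · simp only [ShiftHom.comp, ShiftHom.cast, Category.assoc, ← Functor.map_comp]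
    exact α.zigzag_eq_map β α' β' (by linarith) (by linarith) (fun t _ => hαβ t)
      (fun t _ => hαβ' t) _ _ _
  · simp only [ShiftHom.comp, ShiftHom.cast, Category.assoc]
    rw [← F.map_comp_assoc]
    exact β'.zigzag_eq_map α' β α (by linarith) (by linarith) (fun t _ => hβα' t)
      (fun t _ => hβα t) _ _ _

lemma ENNReal.sInf_le_sInf_add_sInf {S A B : Set ENNReal}
    (h : ∀ x ∈ A, ∀ y ∈ B, ∃ z ∈ S, z ≤ x + y) : sInf S ≤ sInf A + sInf B := by
  rw [ENNReal.sInf_add]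
  refine le_iInf₂ fun x hx => ?_
  rw [ENNReal.add_sInf]
  refine le_iInf₂ fun y hy => ?_
  obtain ⟨z, hz, hzxy⟩ := h x hx y hy
  exact (sInf_le hz).trans hzxy

theorem dIsom_triangle (F G H : PersMod k) (a b a' b' : ℝ) :
    (IsIsomPair F G a b → IsIsomPair G H a' b' → IsIsomPair F H (a + a') (b + b')) ∧
    dIsom F H ≤ dIsom F G + dIsom G H := by
  refine ⟨IsIsomPair.trans, ENNReal.sInf_le_sInf_add_sInf ?_⟩
  rintro _ ⟨p, q, hpq, rfl⟩ _ ⟨p', q', hpq', rfl⟩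
  refine ⟨_, ⟨p + p', q + q', hpq.trans hpq', rfl⟩, ?_⟩
  calc ENNReal.ofReal (p + p' + (q + q')) = ENNReal.ofReal ((p + q) + (p' + q')) := by ring_nf
    _ ≤ ENNReal.ofReal (p + q) + ENNReal.ofReal (p' + q') := ENNReal.ofReal_add_le
end

section
/- Let F, G be persistence modules over ℝ such that for every d ≥ 0 the k-vector space Hom(G, T_d G) is one-dimensional, spanned by τ_{0,d}(G), and suppose τ_{0,d}(G) ≠ 0 for all d ≥ 0 (equivalently, the canonical map Hom(G, T_d G) → colim_{c→∞} Hom(G, T_c G) is injective for each d ≥ 0). If (F,G) is weakly (a,b)-isomorphic, then (F,G) is (a,b)-isomorphic. Consequently, d_isom(F,G) = d_w(F,G) for such pairs. -/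
open CategoryTheory

variable {k : Type} [Field k]

/-!
In the colimit `colim_c Hom(G, T_c G)` the weak isomorphism data satisfy `[α] = [δ]` and
`[β] = [γ]`, hence `[T_b α ∘ β] = [T_b δ ∘ γ] = [τ_{0,a+b}(G)]`. By one-dimensionality
`T_b α ∘ β = r • τ_{0,a+b}(G)`, and since every `τ_{0,d}(G)` is nonzero the colimit sees the
scalar, so `r = 1`.
-/

lemma comp_map_eq_of_comp_map_homOfLE_eq {ι C : Type*} [Preorder ι] [Category C] (G : ι ⥤ C)
    {X : C} {x y z : ι} {u v : X ⟶ G.obj x} (hxy : x ≤ y)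
    (h : u ≫ G.map (homOfLE hxy) = v ≫ G.map (homOfLE hxy)) (hyz : y ≤ z) (g : x ⟶ z) :
    u ≫ G.map g = v ≫ G.map g := by
  have hg : g = homOfLE hxy ≫ homOfLE hyz := Subsingleton.elim _ _
  rw [hg, G.map_comp, reassoc_of% h]

namespace ShiftHom

variable {F G H : PersMod k} {a b : ℝ}

lemma ext {u v : ShiftHom F G a} (h : ∀ t, u.app t = v.app t) : u = v := by
  cases u
  cases v
  congr
  exact funext h

lemma app_comp_map_s9 (v : ShiftHom G H b) {s s' z : ℝ} (hs : s ≤ s') (g : s + b ⟶ z)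
    (h : s' + b ≤ z) :
    v.app s ≫ H.map g = G.map (homOfLE hs) ≫ v.app s' ≫ H.map (homOfLE h) := by
  rw [reassoc_of% v.nat, ← H.map_comp]
  rfl

lemma comp_app_eq_map_iff (u : ShiftHom F G a) (v : ShiftHom G F b) (t : ℝ) (hab : 0 ≤ a + b) :
    (u.comp v).app t = F.map (homOfLE (by linarith : t ≤ t + (a + b))) ↔
      u.app t ≫ v.app (t + a) = F.map (homOfLE (by linarith : t ≤ t + a + b)) := by
  rw [← cancel_mono (F.map (eqToHom (add_assoc t a b))), ← F.map_comp, homOfLE_comp_eqToHom,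
    Category.assoc]
  rfl

lemma comp_eq_tauHom_iff (u : ShiftHom F G a) (v : ShiftHom G F b) (hab : 0 ≤ a + b) :
    u.comp v = tauHom F (a + b) hab ↔
      ∀ t, u.app t ≫ v.app (t + a) = F.map (homOfLE (by linarith : t ≤ t + a + b)) :=
  ⟨fun h t => (comp_app_eq_map_iff u v t hab).1 (congrArg (·.app t) h),
    fun h => ext fun t => (comp_app_eq_map_iff u v t hab).2 (h t)⟩

/-- `u` and `v` have the same image in `colim_{c → ∞} Hom(F, T_{a+c} G)`. -/
def EventuallyEq (u v : ShiftHom F G a) : Prop :=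
  ∃ c : ℝ, ∃ hc : 0 ≤ c, ∀ t : ℝ,
    u.app t ≫ G.map (homOfLE (by linarith : t + a ≤ t + (a + c))) =
      v.app t ≫ G.map (homOfLE (by linarith : t + a ≤ t + (a + c)))

namespace EventuallyEq

lemma of_comp_map_eq {u v : ShiftHom F G a} {c : ℝ} (hc : 0 ≤ c)
    (h : ∀ t : ℝ, u.app t ≫ G.map (homOfLE (by linarith : t + a ≤ t + a + c)) =
      v.app t ≫ G.map (homOfLE (by linarith : t + a ≤ t + a + c))) :
    u.EventuallyEq v :=
  ⟨c, hc, fun t => comp_map_eq_of_comp_map_homOfLE_eq G _ (h t) (by linarith) _⟩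

lemma trans {u v w : ShiftHom F G a} (huv : u.EventuallyEq v) (hvw : v.EventuallyEq w) :
    u.EventuallyEq w := by
  obtain ⟨c, hc, huv⟩ := huv
  obtain ⟨c', hc', hvw⟩ := hvw
  refine ⟨c + c', by linarith, fun t => ?_⟩
  rw [comp_map_eq_of_comp_map_homOfLE_eq G _ (huv t) (by linarith),
    comp_map_eq_of_comp_map_homOfLE_eq G _ (hvw t) (by linarith)]

lemma comp_left {u u' : ShiftHom F G a} (hu : u.EventuallyEq u') (v : ShiftHom G H b) :
    (u.comp v).EventuallyEq (u'.comp v) := by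
  obtain ⟨c, hc, hu⟩ := hu
  refine ⟨c, hc, fun t => ?_⟩
  simp only [comp, Category.assoc, ← H.map_comp]
  rw [app_comp_map_s9 v (by linarith : t + a ≤ t + (a + c)) _ (by linarith), reassoc_of% hu t]

lemma comp_right (u : ShiftHom F G a) {v v' : ShiftHom G H b} (hv : v.EventuallyEq v') :
    (u.comp v).EventuallyEq (u.comp v') := by
  obtain ⟨c, hc, hv⟩ := hv
  refine ⟨c, hc, fun t => ?_⟩
  simp only [comp, Category.assoc, ← H.map_comp]
  rw [comp_map_eq_of_comp_map_homOfLE_eq H _ (hv (t + a)) (by linarith)]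

lemma comp {u u' : ShiftHom F G a} {v v' : ShiftHom G H b} (hu : u.EventuallyEq u')
    (hv : v.EventuallyEq v') : (u.comp v).EventuallyEq (u'.comp v') :=
  (hu.comp_left v).trans (comp_right u' hv)

lemma eq_one_of_smul_tauHom {d : ℝ} {hd : 0 ≤ d}
    (hne : ∀ e : ℝ, ∀ he : 0 ≤ e, ∃ t : ℝ, G.map (homOfLE (by linarith : t ≤ t + e)) ≠ 0)
    {u : ShiftHom G G d} {r : k}
    (hu : ∀ t, u.app t = r • G.map (homOfLE (by linarith : t ≤ t + d)))
    (h : u.EventuallyEq (tauHom G d hd)) : r = 1 := by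
  obtain ⟨c, hc, h⟩ := h
  obtain ⟨t, ht⟩ := hne (d + c) (by linarith)
  have hrt := h t
  simp only [hu, tauHom, Linear.smul_comp, ← G.map_comp, homOfLE_comp] at hrt
  exact smul_left_injective k ht (hrt.trans (one_smul k _).symm)

end EventuallyEq

end ShiftHom

lemma IsWeakIsomPair.eventuallyEq {F G : PersMod k} {a b : ℝ} (h : IsWeakIsomPair F G a b) :
    ∃ (ha : 0 ≤ a) (hb : 0 ≤ b) (α δ : ShiftHom F G a) (β γ : ShiftHom G F b),
      (∀ t : ℝ, α.app t ≫ β.app (t + a) = F.map (homOfLE (by linarith : t ≤ t + a + b))) ∧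
      γ.comp δ = tauHom G (b + a) (by linarith) ∧ α.EventuallyEq δ ∧ β.EventuallyEq γ := by
  obtain ⟨ha, hb, α, δ, β, γ, hαβ, hγδ, hαδ, hβγ⟩ := h
  exact ⟨ha, hb, α, δ, β, γ, hαβ, (ShiftHom.comp_eq_tauHom_iff γ δ _).2 hγδ,
    .of_comp_map_eq ha hαδ, .of_comp_map_eq hb hβγ⟩

lemma IsIsomPair.isWeakIsomPair {F G : PersMod k} {a b : ℝ} (h : IsIsomPair F G a b) :
    IsWeakIsomPair F G a b := by
  obtain ⟨ha, hb, α, β, hαβ, hβα⟩ := h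
  exact ⟨ha, hb, α, α, β, β, hαβ, hβα, fun _ => rfl, fun _ => rfl⟩

lemma dIsom_eq_dWIsom_of_forall_isIsomPair {F G : PersMod k}
    (h : ∀ a b : ℝ, IsWeakIsomPair F G a b → IsIsomPair F G a b) : dIsom F G = dWIsom F G := by
  unfold dIsom dWIsom
  congr 2 with c
  exact exists₂_congr fun a b => and_congr_left' ⟨IsIsomPair.isWeakIsomPair, h a b⟩

theorem isomPair_of_weakIsomPair_of_endo_one_dim (F G : PersMod k)
    (hspan : ∀ d : ℝ, ∀ hd : 0 ≤ d, ∀ u : ShiftHom G G d, ∃ r : k,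
      ∀ t : ℝ, u.app t = r • G.map (homOfLE (by linarith : t ≤ t + d)))
    (hne : ∀ d : ℝ, ∀ hd : 0 ≤ d, ∃ t : ℝ,
      G.map (homOfLE (by linarith : t ≤ t + d)) ≠ 0) :
    (∀ a b : ℝ, IsWeakIsomPair F G a b → IsIsomPair F G a b) ∧
    dIsom F G = dWIsom F G := by
  have isom_of_weak (a b : ℝ) (hw : IsWeakIsomPair F G a b) : IsIsomPair F G a b := by
    obtain ⟨ha, hb, α, δ, β, γ, hαβ, hγδ, hαδ, hβγ⟩ := hw.eventuallyEq
    obtain ⟨r, hr⟩ := hspan (b + a) (by linarith) (β.comp α)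
    have hr1 : r = 1 := ShiftHom.EventuallyEq.eq_one_of_smul_tauHom hne hr (hγδ ▸ hβγ.comp hαδ)
    have hβα : β.comp α = tauHom G (b + a) (by linarith) :=
      ShiftHom.ext fun t => by rw [hr t, hr1, one_smul]; rfl
    exact ⟨ha, hb, α, β, hαβ, (ShiftHom.comp_eq_tauHom_iff β α _).1 hβα⟩
  exact ⟨isom_of_weak, dIsom_eq_dWIsom_of_forall_isIsomPair isom_of_weak⟩
end
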